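/- arXiv:2504.14755 — 2 statements merged into one kernel-verified Lean document; each statement's English description precedes it below -/
import Mathlib

section
/- Let b : [0,∞) → ℝ be continuously differentiable with b(0) > 0, and suppose B(t) = -ln(b(t)/(1+b(t))) satisfies the differential inequality dB/dt ≤ γ/B(t) for some γ > 0 along the trajectory whenever b(t) > 0. Then b(t) > 0 for all t ≥ 0. -/
/-!
On the maximal interval `[0, T)` where `b > 0`, the inequality `B' ≤ γ / B` with `B > 0` gives
`(B²)' = 2 B B' ≤ 2γ`, so `B(t)² ≤ B(0)² + 2γt` stays bounded as `t → T⁻`. But if `b` had a first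
zero at `T`, then `b(t) → 0⁺` and hence `B(t) = -log (b/(1+b)) → +∞` as `t → T⁻`, a contradiction.
-/

open Filter Set Topology

noncomputable def logBarrier (x : ℝ) : ℝ := -Real.log (x / (1 + x))

lemma div_one_add_mem_Ioo {x : ℝ} (hx : 0 < x) : x / (1 + x) ∈ Ioo 0 1 :=
  ⟨by positivity, (div_lt_one (by positivity)).2 (by linarith)⟩

lemma logBarrier_pos {x : ℝ} (hx : 0 < x) : 0 < logBarrier x := by
  obtain ⟨h0, h1⟩ := div_one_add_mem_Ioo hx
  exact neg_pos.2 (Real.log_neg h0 h1)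

lemma differentiableAt_logBarrier {x : ℝ} (hx : 0 < x) : DifferentiableAt ℝ logBarrier x := by
  have hx' : 1 + x ≠ 0 := by positivity
  have hq : x / (1 + x) ≠ 0 := (div_one_add_mem_Ioo hx).1.ne'
  unfold logBarrier
  fun_prop (disch := assumption)

lemma tendsto_logBarrier_nhdsGT_zero : Tendsto logBarrier (𝓝[>] 0) atTop := by
  have hq : Tendsto (fun x : ℝ => x / (1 + x)) (𝓝[>] 0) (𝓝[>] 0) := by
    refine tendsto_nhdsWithin_of_tendsto_nhds_of_eventually_within _ ?_ ?_
    · have hc : ContinuousAt (fun x : ℝ => x / (1 + x)) 0 := by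
        fun_prop (disch := norm_num)
      simpa using hc.tendsto.mono_left nhdsWithin_le_nhds
    · filter_upwards [self_mem_nhdsWithin] with x hx using (div_one_add_mem_Ioo hx).1
  exact tendsto_neg_atBot_atTop.comp (Real.tendsto_log_nhdsGT_zero.comp hq)

lemma sq_le_sq_add_of_deriv_le_div {B : ℝ → ℝ} {γ a t : ℝ} (hat : a ≤ t)
    (hdiff : ∀ x ∈ Icc a t, DifferentiableAt ℝ B x) (hpos : ∀ x ∈ Ioo a t, 0 < B x)
    (hderiv : ∀ x ∈ Ioo a t, deriv B x ≤ γ / B x) :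
    B t ^ 2 ≤ B a ^ 2 + 2 * γ * (t - a) := by
  have hsq : ∀ x ∈ Ioo a t, deriv (fun y => B y ^ 2) x ≤ 2 * γ := by
    intro x hx
    have hBx := hpos x hx
    calc deriv (fun y => B y ^ 2) x = 2 * (B x * deriv B x) := by
          rw [deriv_fun_pow (hdiff x (Ioo_subset_Icc_self hx))]; ring
      _ ≤ 2 * (B x * (γ / B x)) := by gcongr; exact hderiv x hx
      _ = 2 * γ := by rw [mul_div_cancel₀ γ hBx.ne']
  have hmvt := (convex_Icc a t).image_sub_le_mul_sub_of_deriv_le (f := fun y => B y ^ 2)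
    (fun x hx => ((hdiff x hx).pow 2).continuousAt.continuousWithinAt)
    (fun x hx => ((hdiff x (interior_subset hx)).pow 2).differentiableWithinAt)
    (by simpa only [interior_Icc] using hsq) a (left_mem_Icc.2 hat) t (right_mem_Icc.2 hat) hat
  linarith

lemma exists_first_zero {f : ℝ → ℝ} (hf : Continuous f) {a c : ℝ} (hac : a ≤ c)
    (ha : 0 < f a) (hc : f c ≤ 0) :
    ∃ T, a < T ∧ f T = 0 ∧ ∀ s ∈ Ico a T, 0 < f s := by
  set S := {x ∈ Icc a c | f x ≤ 0}
  have hSclosed : IsClosed S := isClosed_Icc.inter (isClosed_le hf continuous_const)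
  have hTS : sInf S ∈ S :=
    hSclosed.csInf_mem ⟨c, ⟨hac, le_rfl⟩, hc⟩ (bddBelow_Icc.mono inter_subset_left)
  obtain ⟨⟨haT, hTc⟩, hfT⟩ := hTS
  have haT' : a < sInf S := haT.lt_of_ne fun h => by rw [← h] at hfT; linarith
  have hbefore : ∀ s ∈ Ico a (sInf S), 0 < f s := fun s hs => by
    by_contra! hfs
    have hsS : s ∈ S := ⟨⟨hs.1, hs.2.le.trans hTc⟩, hfs⟩
    exact (csInf_le (bddBelow_Icc.mono inter_subset_left) hsS).not_gt hs.2
  refine ⟨sInf S, haT', le_antisymm hfT ?_, hbefore⟩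
  refine le_on_closure (fun s hs => (hbefore s hs).le) continuousOn_const hf.continuousOn ?_
  rw [closure_Ico haT'.ne]
  exact right_mem_Icc.2 haT'.le

theorem stmt10_general (b : ℝ → ℝ) (γ : ℝ)
    (hb : ContDiff ℝ 1 b) (hb0 : 0 < b 0)
    (hB : ∀ t : ℝ, 0 ≤ t → 0 < b t →
      deriv (fun s => -Real.log (b s / (1 + b s))) t ≤
        γ / (-Real.log (b t / (1 + b t)))) :
    ∀ t : ℝ, 0 ≤ t → 0 < b t := by
  intro t₀ ht₀
  by_contra! hbt₀
  have hbc : Continuous b := hb.continuous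
  obtain ⟨T, hT, hbT, hbpos⟩ := exists_first_zero hbc ht₀ hb0 hbt₀
  set B : ℝ → ℝ := fun s => logBarrier (b s)
  have hBdiff : ∀ s ∈ Ico 0 T, DifferentiableAt ℝ B s := fun s hs =>
    (differentiableAt_logBarrier (hbpos s hs)).comp s (hb.differentiable one_ne_zero s)
  have hbound : ∀ s ∈ Ico 0 T, B s ^ 2 ≤ B 0 ^ 2 + 2 * γ * s := fun s hs => by
    simpa using sq_le_sq_add_of_deriv_le_div hs.1
      (fun x hx => hBdiff x ⟨hx.1, hx.2.trans_lt hs.2⟩)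
      (fun x hx => logBarrier_pos (hbpos x ⟨hx.1.le, hx.2.trans hs.2⟩))
      (fun x hx => hB x hx.1.le (hbpos x ⟨hx.1.le, hx.2.trans hs.2⟩))
  have hbto : Tendsto b (𝓝[<] T) (𝓝[>] 0) := by
    refine tendsto_nhdsWithin_of_tendsto_nhds_of_eventually_within _ ?_ ?_
    · exact hbT ▸ (hbc.tendsto T).mono_left nhdsWithin_le_nhds
    · filter_upwards [Ioo_mem_nhdsLT hT] with s hs using hbpos s ⟨hs.1.le, hs.2⟩
  have hBto : Tendsto (fun s => B s ^ 2) (𝓝[<] T) atTop :=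
    (tendsto_pow_atTop two_ne_zero).comp (tendsto_logBarrier_nhdsGT_zero.comp hbto)
  have hrhs : Tendsto (fun s => B 0 ^ 2 + 2 * γ * s) (𝓝[<] T) (𝓝 (B 0 ^ 2 + 2 * γ * T)) :=
    (Continuous.tendsto (by fun_prop) T).mono_left nhdsWithin_le_nhds
  refine not_tendsto_atTop_of_tendsto_nhds hrhs (tendsto_atTop_mono' _ ?_ hBto)
  filter_upwards [Ioo_mem_nhdsLT hT] with s hs using hbound s ⟨hs.1.le, hs.2⟩

/-- Core CBF invariance argument: if `b` is C¹ with `b 0 > 0` and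
`B(t) = -ln(b(t)/(1+b(t)))` satisfies `dB/dt ≤ γ/B(t)` (γ > 0) whenever `b(t) > 0`,
then `b(t) > 0` for all `t ≥ 0`. -/
theorem stmt10 (b : ℝ → ℝ) (γ : ℝ) (hγ : 0 < γ)
    (hb : ContDiff ℝ 1 b) (hb0 : 0 < b 0)
    (hB : ∀ t : ℝ, 0 ≤ t → 0 < b t →
      deriv (fun s => -Real.log (b s / (1 + b s))) t ≤
        γ / (-Real.log (b t / (1 + b t)))) :
    ∀ t : ℝ, 0 ≤ t → 0 < b t :=
  stmt10_general b γ hb hb0 hB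
end

section
/- Consider the control-affine system ẋ = f(x) + g(x)u with f, g locally Lipschitz, and suppose for a C¹ function B : ℝⁿ → (0,∞) and constant γ > 0 the feedback u(x) satisfies L_f B(x) + L_g B(x)·u(x) ≤ γ/B(x) for all x. Then along any solution x(t) on [0,T], B(x(t)) ≤ √(B(x(0))² + 2γt). -/
/-!
Since `L_f B + L_g B · u ≤ γ / B`, the scalar `b(t) = B(x(t))` satisfies `b b' ≤ γ`, i.e.
`(b²)' ≤ 2γ`. Comparing `b²` with the solution `b(0)² + 2γt` of the equality case and taking
square roots gives the bound.
-/

open Set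

theorem sq_le_sq_add_of_mul_hasDerivAt_le {b b' : ℝ → ℝ} {a T γ : ℝ}
    (hb : ∀ t ∈ Icc a T, HasDerivAt b (b' t) t) (hbb' : ∀ t ∈ Icc a T, b t * b' t ≤ γ) :
    ∀ t ∈ Icc a T, b t ^ 2 ≤ b a ^ 2 + 2 * γ * (t - a) := by
  have hsq : ∀ t ∈ Icc a T, HasDerivAt (fun s ↦ b s ^ 2) (2 * b t * b' t) t := fun t ht ↦ by
    simpa using (hb t ht).fun_pow 2
  have hbound : ∀ t, HasDerivAt (fun s ↦ b a ^ 2 + 2 * γ * (s - a)) (2 * γ) t := fun t ↦ by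
    simpa using ((hasDerivAt_id t).sub_const a).const_mul (2 * γ) |>.const_add (b a ^ 2)
  refine fun t ht ↦ image_le_of_deriv_right_le_deriv_boundary
    (fun s hs ↦ (hsq s hs).continuousAt.continuousWithinAt)
    (fun s hs ↦ (hsq s (Ico_subset_Icc_self hs)).hasDerivWithinAt) (by simp)
    (fun s _ ↦ (hbound s).continuousAt.continuousWithinAt)
    (fun s _ ↦ (hbound s).hasDerivWithinAt) (fun s hs ↦ ?_) ht
  linarith [hbb' s (Ico_subset_Icc_self hs)]

theorem stmt19_general (n p : ℕ) (T γ : ℝ)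
    (f : (Fin n → ℝ) → Fin n → ℝ)
    (g : (Fin n → ℝ) → ((Fin p → ℝ) →L[ℝ] (Fin n → ℝ)))
    (u : (Fin n → ℝ) → Fin p → ℝ)
    (B : (Fin n → ℝ) → ℝ)
    (hB : ContDiff ℝ 1 B) (hBpos : ∀ y, 0 < B y)
    (hCBF : ∀ y : Fin n → ℝ,
      fderiv ℝ B y (f y) + fderiv ℝ B y (g y (u y)) ≤ γ / B y)
    (x : ℝ → Fin n → ℝ)
    (hx : ∀ t ∈ Set.Icc (0 : ℝ) T,
      HasDerivAt x (f (x t) + g (x t) (u (x t))) t) :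
    ∀ t ∈ Set.Icc (0 : ℝ) T,
      B (x t) ≤ Real.sqrt ((B (x 0)) ^ 2 + 2 * γ * t) := by
  have hBx : ∀ t ∈ Icc 0 T, HasDerivAt (fun s ↦ B (x s))
      (fderiv ℝ B (x t) (f (x t) + g (x t) (u (x t)))) t := fun t ht ↦
    ((hB.differentiable one_ne_zero) (x t)).hasFDerivAt.comp_hasDerivAt t (hx t ht)
  have hBB' : ∀ t ∈ Icc 0 T,
      B (x t) * fderiv ℝ B (x t) (f (x t) + g (x t) (u (x t))) ≤ γ := fun t _ ↦ by
    rw [map_add, mul_comm, ← le_div_iff₀ (hBpos (x t))]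
    exact hCBF (x t)
  intro t ht
  refine Real.le_sqrt_of_sq_le ?_
  simpa using sq_le_sq_add_of_mul_hasDerivAt_le hBx hBB' t ht

/-- Quantitative CBF bound: for the control-affine system `ẋ = f(x) + g(x) u(x)` with
`f, g` locally Lipschitz, a C¹ positive function `B` and `γ > 0` with
`L_f B(x) + L_g B(x)·u(x) ≤ γ/B(x)` for all `x`, along any solution on `[0,T]` we have
`B(x(t)) ≤ √(B(x(0))² + 2γt)`. -/
theorem stmt19 (n p : ℕ) (T γ : ℝ) (hγ : 0 < γ) (hT : 0 ≤ T)
    (f : (Fin n → ℝ) → Fin n → ℝ)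
    (g : (Fin n → ℝ) → ((Fin p → ℝ) →L[ℝ] (Fin n → ℝ)))
    (u : (Fin n → ℝ) → Fin p → ℝ)
    (hf : LocallyLipschitz f) (hg : LocallyLipschitz g)
    (B : (Fin n → ℝ) → ℝ)
    (hB : ContDiff ℝ 1 B) (hBpos : ∀ y, 0 < B y)
    (hCBF : ∀ y : Fin n → ℝ,
      fderiv ℝ B y (f y) + fderiv ℝ B y (g y (u y)) ≤ γ / B y)
    (x : ℝ → Fin n → ℝ)
    (hx : ∀ t ∈ Set.Icc (0 : ℝ) T,
      HasDerivAt x (f (x t) + g (x t) (u (x t))) t) :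
    ∀ t ∈ Set.Icc (0 : ℝ) T,
      B (x t) ≤ Real.sqrt ((B (x 0)) ^ 2 + 2 * γ * t) :=
  stmt19_general n p T γ f g u B hB hBpos hCBF x hx
end
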